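/- Let x > 0 be a real number. Then ψ(x/2 + 1) − ψ((x+1)/2) = 2 · Σ_{k=2}^∞ Σ_{n=0}^∞ (−1/(2n + x + 1))^k, where the double series converges absolutely and ψ denotes the digamma function ψ(t) = Γ'(t)/Γ(t) of the real Gamma function Γ. -/

import Mathlib

open Filter Set

/-- The digamma function ψ(t) = Γ'(t)/Γ(t) of the real Gamma function. -/
noncomputable def digamma (t : ℝ) : ℝ := deriv Real.Gamma t / Real.Gamma t

/-!
Since `log ∘ Γ` is convex, `ψ` is monotone on `(0, ∞)`, and `ψ(t + 1) = ψ(t) + 1/t`. Together these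
give `ψ(b) - ψ(a) = ∑ₙ (1/(n + a) - 1/(n + b))` for `0 < a ≤ b ≤ a + 1`. With `a = (x + 1)/2` and
`b = a + 1/2`, the right-hand side is `2 ∑ₙ (1/Aₙ - 1/(Aₙ + 1))` where `Aₙ = 2n + x + 1 > 1`, and
`1/A - 1/(A + 1) = ∑ₖ (-1/A)^(k+2)` is a geometric series. The double series is dominated by
`(x + 1)^(-k) (n + 1)^(-2)`, so the two summations may be swapped.
-/

open Real Topology

lemma hasDerivAt_log_Gamma {t : ℝ} (ht : 0 < t) : HasDerivAt (log ∘ Gamma) (digamma t) t :=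
  (differentiableAt_Gamma fun m => by linarith [(Nat.cast_nonneg m : (0 : ℝ) ≤ m)]).hasDerivAt.log
    (Gamma_pos_of_pos ht).ne'

lemma digamma_monotoneOn : MonotoneOn digamma (Ioi 0) :=
  (convexOn_log_Gamma.monotoneOn_deriv fun _ ht =>
    (hasDerivAt_log_Gamma ht).differentiableAt).congr fun _ ht => (hasDerivAt_log_Gamma ht).deriv

lemma digamma_add_one {t : ℝ} (ht : 0 < t) : digamma (t + 1) = digamma t + t⁻¹ := by
  have hrec : (fun s => (log ∘ Gamma) (s + 1)) =ᶠ[𝓝 t] fun s => (log ∘ Gamma) s + log s := by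
    filter_upwards [eventually_gt_nhds ht] with s hs
    simp only [Function.comp_apply, Gamma_add_one hs.ne', log_mul hs.ne' (Gamma_pos_of_pos hs).ne',
      add_comm]
  exact ((hasDerivAt_log_Gamma (by linarith)).comp_add_const t 1).unique
    (((hasDerivAt_log_Gamma ht).add (hasDerivAt_log ht.ne')).congr_of_eventuallyEq hrec)

lemma digamma_add_nat {t : ℝ} (ht : 0 < t) (N : ℕ) :
    digamma (t + N) = digamma t + ∑ n ∈ Finset.range N, (n + t)⁻¹ := by
  induction N with
  | zero => simp
  | succ N ih =>
    rw [Nat.cast_succ, ← add_assoc, digamma_add_one (by positivity), ih, Finset.sum_range_succ,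
      add_comm t, add_assoc]

/-- The tail `ψ(b + N) - ψ(a + N)` lies between `0` and `ψ(a + N + 1) - ψ(a + N) = 1/(a + N)`. -/
theorem hasSum_digamma_sub {a b : ℝ} (ha : 0 < a) (hab : a ≤ b) (hba : b ≤ a + 1) :
    HasSum (fun n : ℕ => (n + a)⁻¹ - (n + b)⁻¹) (digamma b - digamma a) := by
  have hb : 0 < b := ha.trans_le hab
  have hpartial (N : ℕ) : ∑ n ∈ Finset.range N, ((n + a)⁻¹ - (n + b)⁻¹) =
      (digamma b - digamma a) - (digamma (b + N) - digamma (a + N)) := by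
    rw [Finset.sum_sub_distrib, digamma_add_nat ha, digamma_add_nat hb]
    ring
  have htail : Tendsto (fun N : ℕ => digamma (b + N) - digamma (a + N)) atTop (𝓝 0) := by
    refine squeeze_zero (fun N => sub_nonneg.2 ?_) (fun N => ?_)
      (tendsto_inv_atTop_zero.comp (tendsto_atTop_add_const_left _ a tendsto_natCast_atTop_atTop))
    · exact digamma_monotoneOn (by positivity : (0 : ℝ) < a + N) (by positivity : (0 : ℝ) < b + N)
        (by linarith)
    · have := digamma_monotoneOn (by positivity : (0 : ℝ) < b + N)
        (by positivity : (0 : ℝ) < a + N + 1) (by linarith)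
      rw [digamma_add_one (by positivity)] at this
      simp only [Function.comp_apply]
      linarith
  rw [hasSum_iff_tendsto_nat_of_nonneg
    fun n => sub_nonneg.2 (inv_anti₀ (by positivity) (by linarith))]
  simpa [hpartial] using tendsto_const_nhds.sub htail

lemma hasSum_neg_inv_pow_add_two {A : ℝ} (hA : 1 < A) :
    HasSum (fun k : ℕ => (-1 / A) ^ (k + 2)) (A⁻¹ - (A + 1)⁻¹) := by
  have hr : |-1 / A| < 1 := by
    rw [abs_div, abs_neg, abs_one, abs_of_pos (by linarith), div_lt_one (by linarith)]
    exact hA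
  have hA0 : A ≠ 0 := by positivity
  have hsum : (-1 / A) ^ 2 * (1 - -1 / A)⁻¹ = A⁻¹ - (A + 1)⁻¹ := by
    rw [show 1 - -1 / A = (A + 1) / A by field_simp; ring, inv_div, inv_sub_inv hA0 (by positivity)]
    field_simp
    ring
  have h := (hasSum_geometric_of_abs_lt_one hr).mul_left ((-1 / A) ^ 2)
  simp only [← pow_add, add_comm 2, hsum] at h
  exact h

lemma summable_abs_neg_inv_pow {x : ℝ} (hx : 0 < x) :
    Summable (fun p : ℕ × ℕ => |(-1 / (2 * (p.2 : ℝ) + x + 1)) ^ (p.1 + 2)|) := by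
  have hgeom : Summable (fun k : ℕ => (x + 1)⁻¹ ^ k) :=
    summable_geometric_of_lt_one (by positivity) (inv_lt_one_of_one_lt₀ (by linarith))
  have hsq : Summable (fun n : ℕ => ((n : ℝ) + 1)⁻¹ ^ 2) := by
    simpa using (summable_nat_add_iff 1).2 (Real.summable_nat_pow_inv.2 one_lt_two)
  refine (hgeom.mul_of_nonneg hsq (fun _ => by positivity) (fun _ => by positivity)).of_nonneg_of_le
    (fun _ => abs_nonneg _) fun ⟨k, n⟩ => ?_
  rw [abs_pow, abs_div, abs_neg, abs_one, abs_of_pos (by positivity), one_div, pow_add]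
  gcongr <;> linarith [(Nat.cast_nonneg n : (0 : ℝ) ≤ n)]

theorem zeta_stmt_8 (x : ℝ) (hx : 0 < x) :
    Summable (fun p : ℕ × ℕ => |(-1 / (2 * (p.2 : ℝ) + x + 1)) ^ (p.1 + 2)|) ∧
    digamma (x / 2 + 1) - digamma ((x + 1) / 2) =
      2 * ∑' k : ℕ, ∑' n : ℕ, (-1 / (2 * (n : ℝ) + x + 1)) ^ (k + 2) := by
  have habs := summable_abs_neg_inv_pow hx
  refine ⟨habs, ?_⟩
  have hA (n : ℕ) : 1 < 2 * (n : ℝ) + x + 1 := by linarith [(Nat.cast_nonneg n : (0 : ℝ) ≤ n)]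
  calc digamma (x / 2 + 1) - digamma ((x + 1) / 2)
      = ∑' n : ℕ, ((n + (x + 1) / 2)⁻¹ - (n + (x / 2 + 1))⁻¹) :=
        (hasSum_digamma_sub (by positivity) (by linarith) (by linarith)).tsum_eq.symm
    _ = 2 * ∑' n : ℕ, ((2 * (n : ℝ) + x + 1)⁻¹ - (2 * (n : ℝ) + x + 1 + 1)⁻¹) := by
        rw [← tsum_mul_left]
        congr 1 with n
        rw [show (n : ℝ) + (x + 1) / 2 = (2 * n + x + 1) / 2 by ring,
          show (n : ℝ) + (x / 2 + 1) = (2 * n + x + 1 + 1) / 2 by ring, inv_div, inv_div]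
        ring
    _ = 2 * ∑' k : ℕ, ∑' n : ℕ, (-1 / (2 * (n : ℝ) + x + 1)) ^ (k + 2) := by
        rw [← Summable.tsum_comm (f := fun k n : ℕ => (-1 / (2 * (n : ℝ) + x + 1)) ^ (k + 2))
          habs.of_abs]
        simp_rw [(hasSum_neg_inv_pow_add_two (hA _)).tsum_eq]
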